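/- Let E ⊆ ℝ be measurable and 0 < λ < α < 1. Define the iterated halos H⁺_α^{(0)}(E) = E and H⁺_α^{(k)}(E) = {x : M⁺1_{H⁺_α^{(k-1)}(E)}(x) > α}. Then H⁺_λ(E) ⊆ H⁺_α^{(N)}(E) where N = ⌈log(1/λ)/log(1/α)⌉. -/

import Mathlib

open MeasureTheory Set

noncomputable def Mplus (f : ℝ → ℝ) (x : ℝ) : ℝ :=
  ⨆ h : {h : ℝ // 0 < h}, (h.1)⁻¹ * ∫ t in x..(x + h.1), |f t|

noncomputable def Mminus (f : ℝ → ℝ) (x : ℝ) : ℝ :=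
  ⨆ h : {h : ℝ // 0 < h}, (h.1)⁻¹ * ∫ t in (x - h.1)..x, |f t|

noncomputable def halo (γ : ℝ) (E : Set ℝ) : Set ℝ :=
  {x | γ < Mplus (E.indicator fun _ => (1:ℝ)) x}

noncomputable def wsize (w : ℝ → ℝ) (E : Set ℝ) : ENNReal :=
  ∫⁻ x in E, ENNReal.ofReal (w x)

noncomputable def tauber (w : ℝ → ℝ) (α : ℝ) : ENNReal :=
  ⨆ E : {E : Set ℝ // MeasurableSet E ∧ 0 < wsize w E ∧ wsize w E < ⊤},
    wsize w (halo α E.1) / wsize w E.1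

/-!
The halo `H⁺_α(E)` is open, since each forward average is continuous in `x`, and by the
Lebesgue differentiation theorem it contains almost every point of `E`. The heart of the
argument is a rising-sun estimate: if `x ∉ G = H⁺_α(E)`, every component `(a, b)` of
`G ∩ (x, s)` has its left endpoint outside `G`, so `|E ∩ (a, b)| ≤ α (b - a)`; summing over the
components gives `|E ∩ (x, s]| ≤ α |G ∩ (x, s]|`. Hence `H⁺_λ(E) ⊆ H⁺_{λ/α}(G)` for `λ < α`,
and iterating this `N` times, with `α ^ N ≤ λ`, proves the inclusion.
-/

open Filter

section Components

variable {X : Type*} [TopologicalSpace X] [TopologicalSpace.SeparableSpace X]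
  [LocallyConnectedSpace X] [MeasurableSpace X] [OpensMeasurableSpace X]

theorem IsOpen.measure_le_of_forall_connectedComponentIn {U : Set X} (hU : IsOpen U)
    {μ ν : Measure X}
    (h : ∀ t ∈ U, μ (connectedComponentIn U t) ≤ ν (connectedComponentIn U t)) :
    μ U ≤ ν U := by
  set 𝒞 := connectedComponentIn U '' U
  have hopen : ∀ C ∈ 𝒞, IsOpen C := by
    rintro _ ⟨t, -, rfl⟩
    exact hU.connectedComponentIn
  have hdisj : 𝒞.PairwiseDisjoint id := by
    rintro _ ⟨t, -, rfl⟩ _ ⟨t', -, rfl⟩ hne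
    refine disjoint_left.2 fun u hu hu' => hne ?_
    exact (connectedComponentIn_eq hu).trans (connectedComponentIn_eq hu').symm
  have hcount : 𝒞.Countable :=
    hdisj.countable_of_isOpen hopen fun _ ⟨t, ht, hC⟩ => hC ▸ ⟨t, mem_connectedComponentIn ht⟩
  have hunion : ⋃₀ 𝒞 = U := by
    refine subset_antisymm (sUnion_subset ?_) fun t ht =>
      ⟨_, mem_image_of_mem _ ht, mem_connectedComponentIn ht⟩
    rintro _ ⟨t, -, rfl⟩
    exact connectedComponentIn_subset U t
  have hmeas : ∀ C ∈ 𝒞, MeasurableSet C := fun C hC => (hopen C hC).measurableSet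
  rw [← hunion, measure_sUnion hcount hdisj hmeas, measure_sUnion hcount hdisj hmeas]
  refine ENNReal.tsum_le_tsum ?_
  rintro ⟨_, t, ht, rfl⟩
  exact h t ht

end Components

theorem sInf_connectedComponentIn_notMem {U : Set ℝ} (hU : IsOpen U) {t : ℝ}
    (hbdd : BddBelow (connectedComponentIn U t)) (ht : t ∈ U) :
    sInf (connectedComponentIn U t) ∉ U := by
  set C := connectedComponentIn U t
  intro haU
  have hCa : connectedComponentIn U (sInf C) = C := by
    obtain ⟨y, hya, hyC⟩ := mem_closure_iff_nhds.1
      (csInf_mem_closure ⟨t, mem_connectedComponentIn ht⟩ hbdd) _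
      (connectedComponentIn_mem_nhds (hU.mem_nhds haU))
    exact (connectedComponentIn_eq hya).trans (connectedComponentIn_eq hyC).symm
  have haC : sInf C ∈ C := by
    have := mem_connectedComponentIn haU
    rwa [hCa] at this
  obtain ⟨l, hl, hlC⟩ := exists_Ioc_subset_of_mem_nhds
    (hU.connectedComponentIn.mem_nhds haC) (exists_lt (sInf C))
  obtain ⟨m, hlm, hma⟩ := exists_between hl
  exact (csInf_le hbdd (hlC ⟨hlm, hma.le⟩)).not_gt hma

noncomputable def forwardAverage (f : ℝ → ℝ) (x h : ℝ) : ℝ :=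
  h⁻¹ * ∫ t in x..(x + h), |f t|

section Mplus

variable {f : ℝ → ℝ}

theorem MeasureTheory.LocallyIntegrable.abs (hf : LocallyIntegrable f) :
    LocallyIntegrable fun t => |f t| :=
  hf.mono hf.aestronglyMeasurable.norm (by simp)

theorem MeasureTheory.LocallyIntegrable.intervalIntegrable (hf : LocallyIntegrable f) (a b : ℝ) :
    IntervalIntegrable f volume a b :=
  (hf.integrableOn_isCompact isCompact_uIcc).intervalIntegrable

theorem intervalIntegral_abs_eq_sub (hf : LocallyIntegrable f) (x h : ℝ) :
    ∫ t in x..(x + h), |f t| = (∫ t in (0:ℝ)..(x + h), |f t|) - ∫ t in (0:ℝ)..x, |f t| :=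
  (intervalIntegral.integral_interval_sub_left (hf.abs.intervalIntegrable _ _)
    (hf.abs.intervalIntegrable _ _)).symm

theorem continuous_forwardAverage (hf : LocallyIntegrable f) (h : ℝ) :
    Continuous fun x => forwardAverage f x h := by
  have hF := intervalIntegral.continuous_primitive hf.abs.intervalIntegrable 0
  simp only [forwardAverage, intervalIntegral_abs_eq_sub hf]
  fun_prop

theorem lowerSemicontinuous_Mplus (hf : LocallyIntegrable f)
    (hbdd : ∀ x, BddAbove (range fun h : {h : ℝ // 0 < h} => forwardAverage f x h)) :
    LowerSemicontinuous (Mplus f) :=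
  lowerSemicontinuous_ciSup hbdd fun h => (continuous_forwardAverage hf h.1).lowerSemicontinuous

theorem ae_abs_le_Mplus (hf : LocallyIntegrable f)
    (hbdd : ∀ x, BddAbove (range fun h : {h : ℝ // 0 < h} => forwardAverage f x h)) :
    ∀ᵐ x, |f x| ≤ Mplus f x := by
  filter_upwards [_root_.LocallyIntegrable.ae_hasDerivAt_integral hf.abs] with x hx
  refine le_of_tendsto ((hx 0).tendsto_slope_zero_right) ?_
  filter_upwards [self_mem_nhdsWithin] with h (hh : 0 < h)
  rw [smul_eq_mul, ← intervalIntegral_abs_eq_sub hf]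
  exact le_ciSup (hbdd x) ⟨h, hh⟩

end Mplus

section Halo

variable {E : Set ℝ} {x γ : ℝ}

theorem volume_inter_Ioc_ne_top (E : Set ℝ) (a b : ℝ) : volume (E ∩ Ioc a b) ≠ ⊤ :=
  ((measure_mono inter_subset_right).trans_lt measure_Ioc_lt_top).ne

theorem intervalIntegral_abs_indicator_one (hE : MeasurableSet E) (x : ℝ) {h : ℝ} (hh : 0 ≤ h) :
    ∫ t in x..(x + h), |E.indicator (fun _ => (1:ℝ)) t| = volume.real (E ∩ Ioc x (x + h)) := by
  have habs : (fun t => |E.indicator (fun _ => (1:ℝ)) t|) = E.indicator 1 := by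
    ext t
    exact abs_of_nonneg (indicator_nonneg (fun _ _ => zero_le_one) t)
  rw [intervalIntegral.integral_of_le (by linarith), habs, integral_indicator_one hE,
    measureReal_restrict_apply hE]

theorem forwardAverage_indicator_le_one (hE : MeasurableSet E) (x : ℝ) {h : ℝ} (hh : 0 < h) :
    forwardAverage (E.indicator fun _ => 1) x h ≤ 1 := by
  rw [forwardAverage, intervalIntegral_abs_indicator_one hE x hh.le, inv_mul_le_one₀ hh]
  calc volume.real (E ∩ Ioc x (x + h)) ≤ volume.real (Ioc x (x + h)) :=
        measureReal_mono inter_subset_right measure_Ioc_lt_top.ne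
    _ = h := by rw [Real.volume_real_Ioc_of_le (by linarith)]; ring

theorem bddAbove_forwardAverage_indicator (hE : MeasurableSet E) (x : ℝ) :
    BddAbove (range fun h : {h : ℝ // 0 < h} => forwardAverage (E.indicator fun _ => 1) x h) :=
  ⟨1, by rintro _ ⟨h, rfl⟩; exact forwardAverage_indicator_le_one hE x h.2⟩

theorem locallyIntegrable_indicator_one (hE : MeasurableSet E) :
    LocallyIntegrable (E.indicator fun _ => (1:ℝ)) :=
  (locallyIntegrable_const 1).indicator hE

theorem isOpen_halo (hE : MeasurableSet E) (γ : ℝ) : IsOpen (halo γ E) :=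
  (lowerSemicontinuous_Mplus (locallyIntegrable_indicator_one hE)
    (bddAbove_forwardAverage_indicator hE)).isOpen_preimage γ

theorem ae_le_halo (hE : MeasurableSet E) (hγ : γ < 1) : E ≤ᵐ[volume] halo γ E := by
  filter_upwards [ae_abs_le_Mplus (locallyIntegrable_indicator_one hE)
    (bddAbove_forwardAverage_indicator hE)] with x hx hxE
  rw [indicator_of_mem hxE, abs_one] at hx
  exact hγ.trans_le hx

theorem lt_forwardAverage_indicator_iff (hE : MeasurableSet E) (hγ : 0 ≤ γ) {h : ℝ} (hh : 0 < h) :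
    γ < forwardAverage (E.indicator fun _ => 1) x h ↔
      ENNReal.ofReal (γ * h) < volume (E ∩ Ioc x (x + h)) := by
  rw [forwardAverage, intervalIntegral_abs_indicator_one hE x hh.le, lt_inv_mul_iff₀ hh,
    measureReal_def, ENNReal.ofReal_lt_iff_lt_toReal (by positivity)
      (volume_inter_Ioc_ne_top E _ _), mul_comm]

theorem mem_halo_iff (hE : MeasurableSet E) (hγ : 0 ≤ γ) :
    x ∈ halo γ E ↔ ∃ h > 0, ENNReal.ofReal (γ * h) < volume (E ∩ Ioc x (x + h)) := by
  change γ < ⨆ h : {h : ℝ // 0 < h}, forwardAverage _ x h ↔ _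
  rw [lt_ciSup_iff (bddAbove_forwardAverage_indicator hE x)]
  exact ⟨fun ⟨h, hlt⟩ => ⟨h, h.2, (lt_forwardAverage_indicator_iff hE hγ h.2).1 hlt⟩,
    fun ⟨h, hh, hlt⟩ => ⟨⟨h, hh⟩, (lt_forwardAverage_indicator_iff hE hγ hh).2 hlt⟩⟩

theorem volume_inter_Ioc_le_of_notMem_halo (hE : MeasurableSet E) (hγ : 0 ≤ γ)
    (hx : x ∉ halo γ E) (b : ℝ) : volume (E ∩ Ioc x b) ≤ ENNReal.ofReal (γ * (b - x)) := by
  rcases le_or_gt b x with hb | hb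
  · simp [Ioc_eq_empty_of_le hb]
  · by_contra! hlt
    exact hx ((mem_halo_iff hE hγ).2 ⟨b - x, sub_pos.2 hb, by rwa [add_sub_cancel]⟩)

theorem halo_anti {γ' : ℝ} (h : γ' ≤ γ) : halo γ E ⊆ halo γ' E :=
  fun _ hx => h.trans_lt hx

theorem halo_mono_ae {S T : Set ℝ} (hS : MeasurableSet S) (hT : MeasurableSet T) (hγ : 0 ≤ γ)
    (hST : S ≤ᵐ[volume] T) : halo γ S ⊆ halo γ T := by
  intro x hx
  obtain ⟨h, hh, hlt⟩ := (mem_halo_iff hS hγ).1 hx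
  exact (mem_halo_iff hT hγ).2 ⟨h, hh, hlt.trans_le (measure_mono_ae (hST.inter EventuallyLE.rfl))⟩

theorem IsOpen.subset_halo {U : Set ℝ} (hU : IsOpen U) (hγ0 : 0 ≤ γ) (hγ1 : γ < 1) :
    U ⊆ halo γ U := by
  intro x hx
  obtain ⟨u, hxu, hu⟩ := exists_Ico_subset_of_mem_nhds (hU.mem_nhds hx) (exists_gt x)
  refine (mem_halo_iff hU.measurableSet hγ0).2 ⟨(u - x) / 2, by linarith, ?_⟩
  have hsub : Ioc x (x + (u - x) / 2) ⊆ U := fun t ht => hu ⟨ht.1.le, by linarith [ht.2]⟩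
  rw [inter_eq_right.2 hsub, Real.volume_Ioc, add_sub_cancel_left]
  exact (ENNReal.ofReal_lt_ofReal_iff (by linarith)).2 (by nlinarith)

theorem volume_inter_le_of_sInf_notMem_halo (hE : MeasurableSet E) (hγ : 0 ≤ γ) {C : Set ℝ}
    (hC : IsConnected C) (hb : BddBelow C) (ha : BddAbove C) (hCinf : sInf C ∉ C)
    (hhalo : sInf C ∉ halo γ E) : volume (E ∩ C) ≤ ENNReal.ofReal γ * volume C := by
  have hsub : C ⊆ Ioc (sInf C) (sSup C) := fun t ht =>
    ⟨(csInf_le hb ht).lt_of_ne fun h => hCinf (h ▸ ht), le_csSup ha ht⟩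
  calc volume (E ∩ C) ≤ volume (E ∩ Ioc (sInf C) (sSup C)) :=
        measure_mono (inter_subset_inter_right E hsub)
    _ ≤ ENNReal.ofReal (γ * (sSup C - sInf C)) :=
        volume_inter_Ioc_le_of_notMem_halo hE hγ hhalo _
    _ = ENNReal.ofReal γ * volume (Ioo (sInf C) (sSup C)) := by
        rw [ENNReal.ofReal_mul hγ, Real.volume_Ioo]
    _ ≤ ENNReal.ofReal γ * volume C := by
        gcongr
        exact hC.Ioo_csInf_csSup_subset hb ha

theorem volume_inter_Ioc_le_halo (hE : MeasurableSet E) (hγ0 : 0 ≤ γ) (hγ1 : γ < 1)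
    (hx : x ∉ halo γ E) (s : ℝ) :
    volume (E ∩ Ioc x s) ≤ ENNReal.ofReal γ * volume (halo γ E ∩ Ioc x s) := by
  set G := halo γ E
  set U := G ∩ Ioo x s
  have hU : IsOpen U := (isOpen_halo hE γ).inter isOpen_Ioo
  have hcomp : volume.restrict E U ≤ (ENNReal.ofReal γ • volume) U := by
    refine hU.measure_le_of_forall_connectedComponentIn fun t ht => ?_
    set C := connectedComponentIn U t
    have htC : t ∈ C := mem_connectedComponentIn ht
    have hCU : C ⊆ U := connectedComponentIn_subset U t
    have hb : BddBelow C := ⟨x, fun y hy => (hCU hy).2.1.le⟩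
    have ha : BddAbove C := ⟨s, fun y hy => (hCU hy).2.2.le⟩
    have hinfU : sInf C ∉ U := sInf_connectedComponentIn_notMem hU hb ht
    have hinfG : sInf C ∉ G := by
      intro hG
      rcases (le_csInf ⟨t, htC⟩ fun y hy => (hCU hy).2.1.le).eq_or_lt with heq | hlt
      · exact hx (heq ▸ hG)
      · exact hinfU ⟨hG, hlt, (csInf_le hb htC).trans_lt ht.2.2⟩
    rw [Measure.restrict_apply' hE, Measure.smul_apply, smul_eq_mul, inter_comm]
    exact volume_inter_le_of_sInf_notMem_halo hE hγ0
      (isConnected_connectedComponentIn_iff.2 ht) hb ha (fun h => hinfU (hCU h)) hinfG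
  rw [Measure.restrict_apply' hE, Measure.smul_apply, smul_eq_mul] at hcomp
  have hae : (E ∩ Ioc x s : Set ℝ) ≤ᵐ[volume] (U ∩ E : Set ℝ) := by
    filter_upwards [ae_le_halo hE hγ1, compl_mem_ae_iff.2 (measure_singleton s)]
      with t htG hts
    rintro ⟨htE, htx, hts'⟩
    exact ⟨⟨htG htE, htx, hts'.lt_of_ne hts⟩, htE⟩
  calc volume (E ∩ Ioc x s) ≤ volume (U ∩ E) := measure_mono_ae hae
    _ ≤ ENNReal.ofReal γ * volume U := hcomp
    _ ≤ ENNReal.ofReal γ * volume (G ∩ Ioc x s) := by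
        gcongr
        exact inter_subset_inter_right G Ioo_subset_Ioc_self

end Halo

theorem halo_subset_halo_div_halo {E : Set ℝ} (hE : MeasurableSet E) {lam α : ℝ} (h0 : 0 < lam)
    (h1 : lam < α) (h2 : α < 1) : halo lam E ⊆ halo (lam / α) (halo α E) := by
  have hα0 : 0 < α := h0.trans h1
  have hG := isOpen_halo hE α
  have hratio : 0 ≤ lam / α := (div_pos h0 hα0).le
  intro x hx
  by_cases hxG : x ∈ halo α E
  · exact hG.subset_halo hratio ((div_lt_one hα0).2 h1) hxG
  obtain ⟨h, hh, hlt⟩ := (mem_halo_iff hE h0.le).1 hx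
  refine (mem_halo_iff hG.measurableSet hratio).2 ⟨h, hh, ?_⟩
  refine (ENNReal.mul_lt_mul_iff_right (ENNReal.ofReal_pos.2 hα0).ne' ENNReal.ofReal_ne_top).1 ?_
  calc ENNReal.ofReal α * ENNReal.ofReal (lam / α * h) = ENNReal.ofReal (lam * h) := by
        rw [← ENNReal.ofReal_mul hα0.le]
        field_simp
    _ < volume (E ∩ Ioc x (x + h)) := hlt
    _ ≤ ENNReal.ofReal α * volume (halo α E ∩ Ioc x (x + h)) :=
        volume_inter_Ioc_le_halo hE hα0.le h2 hxG _

theorem halo_subset_iterate_halo {α : ℝ} (hα0 : 0 < α) (hα1 : α < 1) {n : ℕ} (hn : 1 ≤ n)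
    {lam : ℝ} {E : Set ℝ} (hE : MeasurableSet E) (h0 : 0 < lam) (hpow : α ^ n ≤ lam) :
    halo lam E ⊆ (fun S => halo α S)^[n] E := by
  induction n, hn using Nat.le_induction generalizing lam E with
  | base => simpa using halo_anti (pow_one α ▸ hpow)
  | succ n hn ih =>
    rw [Function.iterate_succ_apply]
    have hG := (isOpen_halo hE α).measurableSet
    rcases lt_or_ge lam α with hlam | hlam
    · refine (halo_subset_halo_div_halo hE h0 hlam hα1).trans (ih hG (div_pos h0 hα0) ?_)
      rwa [le_div_iff₀ hα0, ← pow_succ]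
    · calc halo lam E ⊆ halo α E := halo_anti hlam
        _ ⊆ halo α (halo α E) := halo_mono_ae hE hG hα0.le (ae_le_halo hE hα1)
        _ ⊆ _ := ih hG hα0 (pow_le_of_le_one hα0.le hα1.le (by omega))

theorem pow_ceil_log_div_log_le {lam α : ℝ} (h0 : 0 < lam) (hα0 : 0 < α) (hα1 : α < 1) :
    α ^ ⌈Real.log (1 / lam) / Real.log (1 / α)⌉₊ ≤ lam := by
  have hlog : 0 < Real.log (1 / α) := Real.log_pos (one_lt_one_div hα0 hα1)
  set N := ⌈Real.log (1 / lam) / Real.log (1 / α)⌉₊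
  have hceil : Real.log (1 / lam) / Real.log (1 / α) ≤ N := Nat.le_ceil _
  rw [div_le_iff₀ hlog] at hceil
  rw [Real.pow_le_iff_le_log hα0 h0]
  simp only [one_div, Real.log_inv] at hceil
  linarith

theorem stmt7 (E : Set ℝ) (hE : MeasurableSet E) (lam α : ℝ)
    (h0 : 0 < lam) (h1 : lam < α) (h2 : α < 1) :
    halo lam E ⊆ (fun S => halo α S)^[⌈Real.log (1 / lam) / Real.log (1 / α)⌉₊] E := by
  have hα0 : 0 < α := h0.trans h1
  have hN : 1 ≤ ⌈Real.log (1 / lam) / Real.log (1 / α)⌉₊ :=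
    Nat.one_le_iff_ne_zero.2 (Nat.ceil_pos.2 (div_pos
      (Real.log_pos (one_lt_one_div h0 (h1.trans h2))) (Real.log_pos (one_lt_one_div hα0 h2)))).ne'
  exact halo_subset_iterate_halo hα0 h2 hN hE h0 (pow_ceil_log_div_log_le h0 hα0 h2)
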